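/- Let d ≥ 3 and suppose η, ξ ∈ ℝ^{d+1} both satisfy the section constraints, with 0 < r(ξ) < 1. Then Re Tr(ρ(η) · log ρ(ξ)) = [ (η_d·ξ_d + η_{d+1}·ξ_{d+1})/(2·r(ξ)) + 2·(η_1 − (d−2)/2)·(ξ_1 − (d−2)/2)/(d²·r(ξ)) ] · log(λ_1(ξ)/λ_2(ξ)) + (1/2)·log(λ_1(ξ)·λ_2(ξ)). -/

import Mathlib

open Matrix Finset in
noncomputable def matLog {n : Type*} [Fintype n] [DecidableEq n]
    (A : Matrix n n ℂ) : Matrix n n ℂ := cfc Real.log A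

noncomputable def qDiv {n : Type*} [Fintype n] [DecidableEq n]
    (σ ρ : Matrix n n ℂ) : ℝ := (Matrix.trace (σ * (matLog σ - matLog ρ))).re

noncomputable def rho (d : ℕ) (ξ : ℕ → ℝ) : Matrix (Fin d) (Fin d) ℂ :=
  fun i j =>
    if i = j then
      if (i : ℕ) = d - 1 then (((1 - ∑ k ∈ Finset.Icc 1 (d - 1), ξ k) / d : ℝ) : ℂ)
      else (((ξ ((i : ℕ) + 1) + 1) / d : ℝ) : ℂ)
    else if (i : ℕ) = 0 ∧ (j : ℕ) = 1 then ((ξ d : ℂ) - Complex.I * (ξ (d + 1) : ℂ)) / 2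
    else if (i : ℕ) = 1 ∧ (j : ℕ) = 0 then ((ξ d : ℂ) + Complex.I * (ξ (d + 1) : ℂ)) / 2
    else 0

noncomputable def rParam (d : ℕ) (ξ : ℕ → ℝ) : ℝ :=
  Real.sqrt ((ξ 1 - ξ 2) ^ 2 / (d : ℝ) ^ 2 + ξ d ^ 2 + ξ (d + 1) ^ 2)

noncomputable def lam1 (d : ℕ) (ξ : ℕ → ℝ) : ℝ :=
  (ξ 1 + ξ 2 + 2) / (2 * d) + rParam d ξ / 2

noncomputable def lam2 (d : ℕ) (ξ : ℕ → ℝ) : ℝ :=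
  (ξ 1 + ξ 2 + 2) / (2 * d) - rParam d ξ / 2

def SectionConstraints (d : ℕ) (ξ : ℕ → ℝ) : Prop :=
  ξ 1 + ξ 2 = (d : ℝ) - 2 ∧ ∀ j : ℕ, 3 ≤ j → j ≤ d - 1 → ξ j = -1

/- ## Auxiliary machinery -/

open Matrix Finset Polynomial

noncomputable def blk (d : ℕ) (B : Matrix (Fin 2) (Fin 2) ℂ) : Matrix (Fin d) (Fin d) ℂ :=
  Matrix.of fun i j => if h : (i : ℕ) < 2 ∧ (j : ℕ) < 2 then B ⟨i.1, h.1⟩ ⟨j.1, h.2⟩ else 0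

lemma sum_two {d : ℕ} (hd : 3 ≤ d) (f : Fin d → ℂ)
    (hf : ∀ k : Fin d, 2 ≤ (k : ℕ) → f k = 0) :
    ∑ k, f k = f ⟨0, by omega⟩ + f ⟨1, by omega⟩ := by
  have h01 : (⟨0, by omega⟩ : Fin d) ≠ ⟨1, by omega⟩ := by simp [Fin.ext_iff]
  rw [← Finset.sum_subset (Finset.subset_univ ({⟨0, by omega⟩, ⟨1, by omega⟩} : Finset (Fin d)))
      (fun x _ hx => hf x (by simp [Fin.ext_iff] at hx; omega))]
  rw [Finset.sum_pair h01]

lemma blk_mul {d : ℕ} (hd : 3 ≤ d) (B C : Matrix (Fin 2) (Fin 2) ℂ) :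
    blk d B * blk d C = blk d (B * C) := by
  ext i j
  rw [Matrix.mul_apply, sum_two hd _ (fun k hk => by simp [blk]; omega)]
  by_cases hi : (i : ℕ) ≤ 1 <;> by_cases hj : (j : ℕ) ≤ 1 <;>
    simp [blk, hi, hj, Matrix.mul_apply, Fin.sum_univ_two, Fin.isValue]

lemma blk_trace {d : ℕ} (hd : 3 ≤ d) (B : Matrix (Fin 2) (Fin 2) ℂ) :
    Matrix.trace (blk d B) = B 0 0 + B 1 1 := by
  rw [Matrix.trace, show Matrix.diag (blk d B) = fun i => blk d B i i from rfl,
    sum_two hd _ (fun k hk => by simp [blk]; omega)]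
  simp [blk]

lemma blk_star {d : ℕ} (B : Matrix (Fin 2) (Fin 2) ℂ) :
    star (blk d B) = blk d (star B) := by
  ext i j
  simp only [Matrix.star_apply, blk, Matrix.of_apply]
  by_cases hi : (i : ℕ) < 2 <;> by_cases hj : (j : ℕ) < 2 <;>
    simp [hi, hj]

lemma blk_add {d : ℕ} (B C : Matrix (Fin 2) (Fin 2) ℂ) :
    blk d (B + C) = blk d B + blk d C := by
  ext i j
  by_cases hi : (i : ℕ) ≤ 1 <;> by_cases hj : (j : ℕ) ≤ 1 <;> simp [blk, hi, hj]

lemma blk_zero {d : ℕ} : blk d (0 : Matrix (Fin 2) (Fin 2) ℂ) = 0 := by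
  ext i j
  by_cases hi : (i : ℕ) < 2 <;> by_cases hj : (j : ℕ) < 2 <;> simp [blk, hi, hj]

lemma blk_sub {d : ℕ} (B C : Matrix (Fin 2) (Fin 2) ℂ) :
    blk d (B - C) = blk d B - blk d C := by
  ext i j
  by_cases hi : (i : ℕ) ≤ 1 <;> by_cases hj : (j : ℕ) ≤ 1 <;> simp [blk, hi, hj]

lemma blk_smul {d : ℕ} (c : ℝ) (B : Matrix (Fin 2) (Fin 2) ℂ) :
    blk d (c • B) = c • blk d B := by
  ext i j
  by_cases hi : (i : ℕ) < 2 <;> by_cases hj : (j : ℕ) < 2 <;> simp [blk, hi, hj]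

noncomputable def bmat (d : ℕ) (ξ : ℕ → ℝ) : Matrix (Fin 2) (Fin 2) ℂ :=
  !![(((ξ 1 + 1) / d : ℝ) : ℂ), ((ξ d : ℂ) - Complex.I * (ξ (d + 1) : ℂ)) / 2;
     ((ξ d : ℂ) + Complex.I * (ξ (d + 1) : ℂ)) / 2, (((ξ 2 + 1) / d : ℝ) : ℂ)]

lemma sum_constraint {d : ℕ} (hd : 3 ≤ d) {ξ : ℕ → ℝ} (hξ : SectionConstraints d ξ) :
    ∑ k ∈ Finset.Icc 1 (d - 1), ξ k = 1 := by
  have h1 : Finset.Icc 1 (d - 1) = insert 1 (insert 2 (Finset.Icc 3 (d - 1))) := by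
    ext x
    simp [Finset.mem_Icc, Finset.mem_insert]
    omega
  rw [h1, Finset.sum_insert (by simp only [Finset.mem_insert, Finset.mem_Icc]; omega),
    Finset.sum_insert (by simp only [Finset.mem_insert, Finset.mem_Icc]; omega)]
  have h2 : ∑ k ∈ Finset.Icc 3 (d - 1), ξ k = ∑ k ∈ Finset.Icc 3 (d - 1), (-1 : ℝ) :=
    Finset.sum_congr rfl (fun x hx => by
      simp [Finset.mem_Icc] at hx; exact hξ.2 x hx.1 hx.2)
  rw [h2, Finset.sum_const, Nat.card_Icc]
  have : d - 1 + 1 - 3 = d - 3 := by omega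
  rw [this]
  have hc : ((d - 3 : ℕ) : ℝ) = (d : ℝ) - 3 := by
    push_cast [Nat.cast_sub (by omega : 3 ≤ d)]; ring
  rw [nsmul_eq_mul, hc]
  linarith [hξ.1]

lemma rho_eq_blk {d : ℕ} (hd : 3 ≤ d) {ξ : ℕ → ℝ} (hξ : SectionConstraints d ξ) :
    rho d ξ = blk d (bmat d ξ) := by
  ext i j
  by_cases hij : i = j
  · subst hij
    rcases Nat.lt_or_ge (i : ℕ) 2 with hi | hi
    · have hne : (i : ℕ) ≠ d - 1 := by omega
      interval_cases h : (i : ℕ) <;>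
        simp_all [rho, blk, bmat, Fin.ext_iff]
    · have hi2 : ¬((i : ℕ) < 2 ∧ (i : ℕ) < 2) := by omega
      by_cases hlast : (i : ℕ) = d - 1
      · simp [rho, blk, hlast, hi2, sum_constraint hd hξ, show ¬(d - 1 < 2) by omega]; intro h; omega
      · have h3 : ξ ((i : ℕ) + 1) = -1 := hξ.2 _ (by omega) (by omega : (i:ℕ)+1 ≤ d - 1)
        simp [rho, blk, hlast, hi2, h3, show ¬((i:ℕ) < 2) by omega]; intro h; omega
  · have h1 : ¬ ((i:ℕ) = (j:ℕ)) := fun h => hij (Fin.ext h)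
    by_cases h01 : (i : ℕ) = 0 ∧ (j : ℕ) = 1
    · simp [rho, blk, hij, h01, bmat, Fin.ext_iff, h01.1, h01.2]
    · by_cases h10 : (i : ℕ) = 1 ∧ (j : ℕ) = 0
      · simp [rho, blk, hij, h01, h10, bmat, Fin.ext_iff, h10.1, h10.2]
      · by_cases hi : (i : ℕ) < 2 <;> by_cases hj : (j : ℕ) < 2
        · exfalso; omega
        all_goals simp [rho, blk, hij, h01, h10, hi, hj]; intro hp hq; omega

section facts
variable {d : ℕ} (hd : 3 ≤ d) {ξ : ℕ → ℝ} (hξ : SectionConstraints d ξ)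

lemma bmat_sa : star (bmat d ξ) = bmat d ξ := by
  ext i j
  fin_cases i <;> fin_cases j <;>
    simp [bmat, Matrix.conjTranspose_apply, Complex.ext_iff]

lemma rParam_sq : rParam d ξ ^ 2 = (ξ 1 - ξ 2) ^ 2 / (d : ℝ) ^ 2 + ξ d ^ 2 + ξ (d + 1) ^ 2 :=
  Real.sq_sqrt (by positivity)

include hd hξ in
lemma lam1_eq : lam1 d ξ = (1 + rParam d ξ) / 2 := by
  have hdR : (0:ℝ) < d := by positivity
  rw [lam1, hξ.1]; field_simp; ring

include hd hξ in
lemma lam2_eq : lam2 d ξ = (1 - rParam d ξ) / 2 := by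
  have hdR : (0:ℝ) < d := by positivity
  rw [lam2, hξ.1]; field_simp; ring

include hd hξ in
lemma bmat_CH : bmat d ξ * bmat d ξ = bmat d ξ - (lam1 d ξ * lam2 d ξ) • 1 := by
  have hdR : (0:ℝ) < d := by positivity
  have hdne : (d:ℝ) ≠ 0 := ne_of_gt hdR
  have hx2 : ξ 2 = (d:ℝ) - 2 - ξ 1 := by linarith [hξ.1]
  have hr2 := rParam_sq (d := d) (ξ := ξ)
  rw [lam1_eq hd hξ, lam2_eq hd hξ]
  rw [hx2] at hr2
  field_simp at hr2
  ext i j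
  fin_cases i <;> fin_cases j <;>
    · simp [bmat, Matrix.mul_apply, Fin.sum_univ_two, Matrix.one_apply, Complex.ext_iff, hx2]
      constructor <;> field_simp <;>
        first
          | ring1
          | linear_combination (-((d:ℝ)*4)) * hr2
          | linear_combination ((d:ℝ)*4) * hr2
          | linear_combination (-(d:ℝ)) * hr2
          | linear_combination (d:ℝ) * hr2
          | linear_combination (-1:ℝ) * hr2

include hd hξ in
lemma rho_sa : IsSelfAdjoint (rho d ξ) := by
  rw [rho_eq_blk hd hξ]
  show star _ = _
  rw [blk_star, bmat_sa]

include hd hξ in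
lemma cube_zero :
    rho d ξ * rho d ξ * rho d ξ - rho d ξ * rho d ξ
      + (lam1 d ξ * lam2 d ξ) • rho d ξ = 0 := by
  have key : bmat d ξ * bmat d ξ * bmat d ξ - bmat d ξ * bmat d ξ
      + (lam1 d ξ * lam2 d ξ) • bmat d ξ = 0 := by
    rw [bmat_CH hd hξ, sub_mul, smul_mul_assoc, one_mul, bmat_CH hd hξ]
    abel
  rw [rho_eq_blk hd hξ, blk_mul hd, blk_mul hd, ← blk_smul, ← blk_sub, ← blk_add, key, blk_zero]

include hd hξ in
lemma spec_subset :
    spectrum ℝ (rho d ξ) ⊆ {0, lam1 d ξ, lam2 d ξ} := by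
  haveI : NeZero d := ⟨by omega⟩
  have hdR : (0:ℝ) < d := by positivity
  have hsum : lam1 d ξ + lam2 d ξ = 1 := by
    rw [lam1_eq hd hξ, lam2_eq hd hξ]; ring
  intro μ hμ
  have h := spectrum.subset_polynomial_aeval (rho d ξ)
    (X * X * X - X * X + C (lam1 d ξ * lam2 d ξ) * X : ℝ[X]) ⟨μ, hμ, rfl⟩
  have haev : (aeval (rho d ξ)) (X * X * X - X * X + C (lam1 d ξ * lam2 d ξ) * X : ℝ[X])
      = rho d ξ * rho d ξ * rho d ξ - rho d ξ * rho d ξ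
        + (lam1 d ξ * lam2 d ξ) • rho d ξ := by
    simp [map_sub, map_add, _root_.map_mul, aeval_X, aeval_C, Algebra.smul_def]
  rw [haev, cube_zero hd hξ, spectrum.zero_eq] at h
  have hev : μ * μ * μ - μ * μ + lam1 d ξ * lam2 d ξ * μ = 0 := by
    simpa using h
  have hfac : μ * ((μ - lam1 d ξ) * (μ - lam2 d ξ)) = 0 := by
    linear_combination hev - μ^2 * hsum
  have h3 : μ = 0 ∨ μ = lam1 d ξ ∨ μ = lam2 d ξ := by
    rcases mul_eq_zero.mp hfac with h0 | h12
    · exact Or.inl h0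
    · rcases mul_eq_zero.mp h12 with h1 | h2
      · exact Or.inr (Or.inl (by linarith [sub_eq_zero.mp h1]))
      · exact Or.inr (Or.inr (by linarith [sub_eq_zero.mp h2]))
  simpa [Set.mem_insert_iff] using h3

end facts

set_option maxHeartbeats 2000000 in
theorem trace_sigma_log_rho_formula
    (d : ℕ) (hd : 3 ≤ d) (η ξ : ℕ → ℝ)
    (hη : SectionConstraints d η) (hξ : SectionConstraints d ξ)
    (hr0 : 0 < rParam d ξ) (hr1 : rParam d ξ < 1) :
    (Matrix.trace (rho d η * matLog (rho d ξ))).re =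
      ((η d * ξ d + η (d + 1) * ξ (d + 1)) / (2 * rParam d ξ) +
        2 * (η 1 - ((d : ℝ) - 2) / 2) * (ξ 1 - ((d : ℝ) - 2) / 2) /
          ((d : ℝ) ^ 2 * rParam d ξ)) *
        Real.log (lam1 d ξ / lam2 d ξ) +
      (1 / 2) * Real.log (lam1 d ξ * lam2 d ξ) := by
  have hdR : (0:ℝ) < d := by positivity
  have hdne : (d:ℝ) ≠ 0 := ne_of_gt hdR
  set r := rParam d ξ with hr
  have hl1 : lam1 d ξ = (1 + r) / 2 := lam1_eq hd hξ
  have hl2 : lam2 d ξ = (1 - r) / 2 := lam2_eq hd hξ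
  have hl1pos : 0 < lam1 d ξ := by rw [hl1]; linarith
  have hl2pos : 0 < lam2 d ξ := by rw [hl2]; linarith
  have hl1ne : lam1 d ξ ≠ 0 := ne_of_gt hl1pos
  have hl2ne : lam2 d ξ ≠ 0 := ne_of_gt hl2pos
  have hrne : r ≠ 0 := ne_of_gt hr0
  set L1 := Real.log (lam1 d ξ) with hL1
  set L2 := Real.log (lam2 d ξ) with hL2
  set α : ℝ := (L1 / lam1 d ξ - L2 / lam2 d ξ) / (lam1 d ξ - lam2 d ξ) with hα
  set β : ℝ := L1 / lam1 d ξ - α * lam1 d ξ with hβ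
  have hsub : lam1 d ξ - lam2 d ξ = r := by rw [hl1, hl2]; ring
  have hsubne : lam1 d ξ - lam2 d ξ ≠ 0 := by rw [hsub]; exact hrne
  have hAsa : IsSelfAdjoint (rho d ξ) := rho_sa hd hξ
  -- replace log by the quadratic polynomial on the spectrum
  have hlog : matLog (rho d ξ) = α • (rho d ξ * rho d ξ) + β • rho d ξ := by
    rw [matLog]
    rw [cfc_congr (g := fun x : ℝ => α * (x * x) + β * x) (fun x hx => ?_)]
    · rw [cfc_add (a := rho d ξ) (fun x : ℝ => α * (x * x)) (fun x : ℝ => β * x),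
        cfc_const_mul α (fun x : ℝ => x * x), cfc_const_mul β (fun x : ℝ => x),
        cfc_mul (fun x : ℝ => x) (fun x : ℝ => x), cfc_id' ℝ (rho d ξ)]
    · rcases spec_subset hd hξ hx with h0 | h1 | h2
      · simp [h0, Real.log_zero]
      · rw [h1]
        show L1 = _
        rw [hβ, hα]
        field_simp
        ring
      · rw [h2]
        show L2 = _
        rw [hβ, hα]
        field_simp
        ring
  rw [hlog, rho_eq_blk hd hη, rho_eq_blk hd hξ, blk_mul hd, bmat_CH hd hξ,
    Matrix.mul_add, Matrix.mul_smul, Matrix.mul_smul, blk_mul hd, blk_mul hd,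
    Matrix.trace_add, Matrix.trace_smul, Matrix.trace_smul, blk_trace hd, blk_trace hd]
  have hx2 : ξ 2 = (d:ℝ) - 2 - ξ 1 := by linarith [hξ.1]
  have he2 : η 2 = (d:ℝ) - 2 - η 1 := by linarith [hη.1]
  rw [Real.log_div hl1ne hl2ne, Real.log_mul hl1ne hl2ne, ← hL1, ← hL2]
  simp only [bmat, Matrix.mul_apply, Matrix.sub_apply, Matrix.smul_apply,
    Matrix.one_apply, Fin.sum_univ_two]
  simp [Complex.add_re, Complex.mul_re, Complex.sub_re, Complex.ofReal_re,
    Complex.ofReal_im, Complex.I_re, Complex.I_im, Complex.div_re, Complex.div_im,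
    Complex.smul_re, Complex.smul_im, Complex.normSq, hx2, he2]
  rw [hβ, hα, hsub, hl1, hl2]
  have h1r : (1:ℝ) - r ≠ 0 := by linarith
  have h1pr : (1:ℝ) + r ≠ 0 := by linarith
  field_simp
  ring
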